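/- The number of elements of the interval L_n = [e, [1][2]⋯[n]] in the absolute order on B_n equals ∑_{k=0}^{⌊n/2⌋} C(n,2k) · 2^{n−k} · (2k−1)!!, where (2k−1)!! = 1·3···(2k−1) and (−1)!! = 1. -/

import Mathlib

open scoped Classical

/-- Minimal length of `w` as a product of elements of `T`. -/
noncomputable def wordLen {G : Type*} [Group G] (T : Set G) (w : G) : ℕ :=
  sInf {k | ∃ l : List G, l.length = k ∧ (∀ t ∈ l, t ∈ T) ∧ l.prod = w}

/-- The absolute order: `u ⪯ v` iff `ℓ_T(u) + ℓ_T(u⁻¹v) = ℓ_T(v)`. -/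
def absLe {G : Type*} [Group G] (T : Set G) (u v : G) : Prop :=
  wordLen T u + wordLen T (u⁻¹ * v) = wordLen T v

/-- We model the set `{±1, …, ±n}` as `Fin n × Bool`; negation flips the Boolean. -/
def negp {n : ℕ} (p : Fin n × Bool) : Fin n × Bool := (p.1, !p.2)

/-- The hyperoctahedral group `B_n`: permutations `w` of `{±1,…,±n}` with
`w(-i) = -w(i)`. -/
def inB {n : ℕ} (w : Equiv.Perm (Fin n × Bool)) : Prop :=
  ∀ p, w (negp p) = negp (w p)

/-- The set of reflections of `B_n`: balanced reflections `[i]` and paired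
reflections `((i,j))`, `((i,-j))`. -/
def reflB (n : ℕ) : Set (Equiv.Perm (Fin n × Bool)) :=
  {σ | (∃ i : Fin n, σ = Equiv.swap (i, true) (i, false)) ∨
    (∃ i j : Fin n, i ≠ j ∧
      σ = Equiv.swap (i, true) (j, true) * Equiv.swap (i, false) (j, false)) ∨
    (∃ i j : Fin n, i ≠ j ∧
      σ = Equiv.swap (i, true) (j, false) * Equiv.swap (i, false) (j, true))}

/-- `O` is an orbit (cycle) of the signed permutation `w`. -/
def isOrbit {n : ℕ} (w : Equiv.Perm (Fin n × Bool)) (O : Set (Fin n × Bool)) : Prop :=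
  ∃ p, O = {q | w.SameCycle p q}

/-- A balanced cycle of `w` corresponds to an orbit which is stable under negation;
a balanced `k`-cycle is a balanced orbit of cardinality `2k`. -/
def balancedOrbit {n : ℕ} (w : Equiv.Perm (Fin n × Bool)) (O : Set (Fin n × Bool)) : Prop :=
  isOrbit w O ∧ negp '' O = O

/-- The number of paired cycles of `w ∈ B_n` (fixed points count as paired
1-cycles): non-balanced orbits come in pairs `{O, -O}`, each such pair being one
paired cycle. -/
noncomputable def pairedCycles {n : ℕ} (w : Equiv.Perm (Fin n × Bool)) : ℕ :=
  Nat.card {O : Set (Fin n × Bool) // isOrbit w O ∧ negp '' O ≠ O} / 2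

lemma negp_involutive {n : ℕ} : Function.Involutive (negp (n := n)) := by
  intro p; cases p; simp [negp]

/-- The signed permutation `-id = [1][2]⋯[n]`, sending every `i` to `-i`. -/
noncomputable def negPerm (n : ℕ) : Equiv.Perm (Fin n × Bool) :=
  negp_involutive.toPerm

/-- The interval `L_n = [e, [1][2]⋯[n]]` of the absolute order on `B_n`. -/
def Ln (n : ℕ) : Set (Equiv.Perm (Fin n × Bool)) :=
  {z | inB z ∧ absLe (reflB n) z (negPerm n)}

/-- The double factorial `(2k-1)!! = 1·3⋯(2k-1)`, with `(-1)!! = 1`. -/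
def dfac (k : ℕ) : ℕ := ∏ i ∈ Finset.range k, (2 * i + 1)

/-!
`B_n` acts on `V = {F : ±[n] → ℚ | F (-p) = -F p} ≅ ℚⁿ`, and a reflection fixes a hyperplane of
`V`, so `ℓ_T(w) ≥ n - dim Fix(w)`. For an involution `z` equality holds: a reflection exchanging
a moved point with its image commutes with `z` and enlarges the fixed space, so it can be peeled
off. Since `-id` fixes nothing, `ℓ_T(-id) = n`, and `z ⪯ -id` forces
`Fix(z) ⊕ Fix(z⁻¹ · (-id)) = V`; `z` acts by `+1` on the first summand and by `-1` on the second,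
hence `z² = 1`. Conversely the two spaces are the `±1`-eigenspaces of an involution `z`, which
gives `z ⪯ -id`. So `L_n` is the set of involutions of `B_n`.

To count the involutions `z` supported on `m + 1` pairs `±i`, fix a point `p` of the support:
either `z p = p`, or `z p = -p`, or `z p = q` for one of the `2m` points `q ≠ ±p`. Multiplying
by the corresponding reflection removes the orbit of `p`, so their number `I(m + 1)` equals
`2 I(m) + 2m I(m - 1)`, a recursion which the closed formula also satisfies.
-/

open Equiv Module

section

variable {n : ℕ}

@[simp] lemma negp_negp (p : Fin n × Bool) : negp (negp p) = p := negp_involutive p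

@[simp] lemma negp_ne (p : Fin n × Bool) : negp p ≠ p := by
  simp [negp, Prod.ext_iff]

@[simp] lemma ne_negp (p : Fin n × Bool) : p ≠ negp p := (negp_ne p).symm

@[simp] lemma negp_inj {p q : Fin n × Bool} : negp p = negp q ↔ p = q :=
  negp_involutive.injective.eq_iff

lemma eq_negp_comm {p q : Fin n × Bool} : p = negp q ↔ q = negp p := by
  constructor <;> rintro rfl <;> simp

lemma negp_eq_iff {p q : Fin n × Bool} : negp q = p ↔ q = negp p := by
  rw [eq_comm, eq_negp_comm]

@[simp] lemma negPerm_apply (p : Fin n × Bool) : negPerm n p = negp p := rfl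

lemma negPerm_mul_self : negPerm n * negPerm n = 1 := Equiv.ext negp_negp

lemma inB_iff_commute {w : Perm (Fin n × Bool)} : inB w ↔ Commute w (negPerm n) :=
  ⟨fun h => Equiv.ext h, fun h p => Equiv.ext_iff.mp h p⟩

lemma inB_negPerm : inB (negPerm n) := fun _ => rfl

lemma inB_mul {u v : Perm (Fin n × Bool)} (hu : inB u) (hv : inB v) : inB (u * v) :=
  inB_iff_commute.2 ((inB_iff_commute.1 hu).mul_left (inB_iff_commute.1 hv))

lemma inB_inv {w : Perm (Fin n × Bool)} (hw : inB w) : inB w⁻¹ :=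
  inB_iff_commute.2 (inB_iff_commute.1 hw).inv_left

/-- The reflection of `B_n` exchanging `p` and `q ≠ p`: the balanced reflection `[p]` if
`q = -p`, the paired reflection `((p, q))` otherwise. -/
def signedSwap (p q : Fin n × Bool) : Perm (Fin n × Bool) :=
  if q = negp p then swap p q else swap p q * swap (negp p) (negp q)

section signedSwap

variable {p q : Fin n × Bool}

lemma commute_swap_swap_negp (h : q ≠ negp p) : Commute (swap p q) (swap (negp p) (negp q)) := by
  refine Perm.Disjoint.commute fun x => ?_
  by_cases hx : x = p ∨ x = q
  · right
    have h' := eq_negp_comm.not.2 h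
    apply swap_apply_of_ne_of_ne <;> rcases hx with rfl | rfl <;> simp [*]
  · left
    push Not at hx
    exact swap_apply_of_ne_of_ne hx.1 hx.2

lemma signedSwap_comm (p q : Fin n × Bool) : signedSwap p q = signedSwap q p := by
  simp only [signedSwap, eq_negp_comm (p := p), swap_comm p q, swap_comm (negp p)]

@[simp] lemma signedSwap_apply_left (p q : Fin n × Bool) : signedSwap p q p = q := by
  unfold signedSwap
  split_ifs with h
  · exact swap_apply_left p q
  · rw [Perm.mul_apply, swap_apply_of_ne_of_ne (ne_negp p) (eq_negp_comm.not.2 h),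
      swap_apply_left]

@[simp] lemma signedSwap_apply_right (p q : Fin n × Bool) : signedSwap p q q = p := by
  rw [signedSwap_comm, signedSwap_apply_left]

lemma signedSwap_apply_of_ne {x : Fin n × Bool} (h₁ : x ≠ p) (h₂ : x ≠ q) (h₃ : x ≠ negp p)
    (h₄ : x ≠ negp q) : signedSwap p q x = x := by
  unfold signedSwap
  split_ifs
  · exact swap_apply_of_ne_of_ne h₁ h₂
  · rw [Perm.mul_apply, swap_apply_of_ne_of_ne h₃ h₄, swap_apply_of_ne_of_ne h₁ h₂]

lemma signedSwap_mul_self (p q : Fin n × Bool) : signedSwap p q * signedSwap p q = 1 := by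
  unfold signedSwap
  split_ifs with h
  · exact swap_mul_self p q
  · rw [(commute_swap_swap_negp h).symm.mul_mul_mul_comm, swap_mul_self, one_mul, swap_mul_self]

lemma conj_signedSwap {w : Perm (Fin n × Bool)} (hw : inB w) :
    w * signedSwap p q * w⁻¹ = signedSwap (w p) (w q) := by
  have hiff : w q = negp (w p) ↔ q = negp p := by rw [← hw p, w.injective.eq_iff]
  unfold signedSwap
  simp only [hiff]
  split_ifs
  · exact (swap_apply_apply w p q).symm
  · rw [← hw p, ← hw q, swap_apply_apply, swap_apply_apply]
    group

lemma signedSwap_negp_negp (p q : Fin n × Bool) :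
    signedSwap (negp p) (negp q) = signedSwap p q := by
  simp only [signedSwap, negp_negp, negp_eq_iff]
  split_ifs with h
  · subst h; rw [negp_negp, swap_comm]
  · exact (commute_swap_swap_negp h).eq.symm

lemma inB_signedSwap (p q : Fin n × Bool) : inB (signedSwap p q) := by
  refine inB_iff_commute.2 (mul_inv_eq_iff_eq_mul.1 ?_).symm
  rw [conj_signedSwap inB_negPerm, negPerm_apply, negPerm_apply, signedSwap_negp_negp]

lemma mem_reflB_iff {t : Perm (Fin n × Bool)} :
    t ∈ reflB n ↔ ∃ p q, q ≠ p ∧ t = signedSwap p q := by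
  constructor
  · rintro (⟨i, rfl⟩ | ⟨i, j, hij, rfl⟩ | ⟨i, j, hij, rfl⟩)
    · exact ⟨(i, true), (i, false), by simp, by simp [signedSwap, negp]⟩
    · exact ⟨(i, true), (j, true), by simp [hij.symm], by simp [signedSwap, negp, hij.symm]⟩
    · exact ⟨(i, true), (j, false), by simp [hij.symm], by simp [signedSwap, negp, hij.symm]⟩
  · rintro ⟨p, q, hne, rfl⟩
    wlog hp : p.2 = true generalizing p q
    · simpa [signedSwap_negp_negp] using this (negp p) (negp q) (by simpa using hne)
        (by simpa [negp] using hp)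
    obtain ⟨i, b⟩ := p
    obtain ⟨j, c⟩ := q
    subst hp
    by_cases hij : j = i
    · subst hij
      cases c
      · exact Or.inl ⟨j, by simp [signedSwap, negp]⟩
      · exact absurd rfl hne
    · cases c
      · exact Or.inr (Or.inr ⟨i, j, Ne.symm hij, by simp [signedSwap, negp, hij]⟩)
      · exact Or.inr (Or.inl ⟨i, j, Ne.symm hij, by simp [signedSwap, negp, hij]⟩)

end signedSwap

lemma Submodule.finrank_le_finrank_inf_ker_add_one {K V : Type*} [Field K] [AddCommGroup V]
    [Module K V] [FiniteDimensional K V] (W : Submodule K V) (L : V →ₗ[K] K) :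
    finrank K W ≤ finrank K ↥(W ⊓ LinearMap.ker L) + 1 := by
  have h₁ := Submodule.finrank_sup_add_finrank_inf_eq W (LinearMap.ker L)
  have h₂ := LinearMap.finrank_range_add_finrank_ker L
  have h₃ := Submodule.finrank_le (W ⊔ LinearMap.ker L)
  have h₄ : finrank K (LinearMap.range L) ≤ 1 := (Submodule.finrank_le _).trans (by simp)
  omega

/-- Functions on `±[n]` that are odd under negation: a copy of `ℚⁿ` on which `B_n` acts by
signed permutation matrices. -/
def negSpace (n : ℕ) : Submodule ℚ ((Fin n × Bool) → ℚ) :=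
  LinearMap.eqLocus (LinearMap.funLeft ℚ ℚ negp) (-LinearMap.id)

def fixSpace (w : Perm (Fin n × Bool)) : Submodule ℚ ((Fin n × Bool) → ℚ) :=
  negSpace n ⊓ LinearMap.eqLocus (LinearMap.funLeft ℚ ℚ w) LinearMap.id

section fixSpace

variable {F : (Fin n × Bool) → ℚ} {u v w : Perm (Fin n × Bool)}

lemma mem_negSpace : F ∈ negSpace n ↔ ∀ p, F (negp p) = -F p := by
  simp [negSpace, funext_iff, LinearMap.funLeft]

lemma mem_fixSpace : F ∈ fixSpace w ↔ F ∈ negSpace n ∧ ∀ p, F (w p) = F p := by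
  simp [fixSpace, funext_iff, LinearMap.funLeft]

def negSpaceEquiv (n : ℕ) : negSpace n ≃ₗ[ℚ] (Fin n → ℚ) where
  toFun F i := F.1 (i, true)
  map_add' _ _ := rfl
  map_smul' _ _ := rfl
  invFun f := ⟨fun p => if p.2 then f p.1 else -f p.1, mem_negSpace.2 fun ⟨i, b⟩ => by
    cases b <;> simp [negp]⟩
  left_inv F := by
    ext ⟨i, b⟩
    cases b
    · simpa [negp] using (mem_negSpace.1 F.2 (i, true)).symm
    · simp
  right_inv _ := rfl

lemma finrank_negSpace : finrank ℚ (negSpace n) = n := by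
  simp [(negSpaceEquiv n).finrank_eq]

lemma fixSpace_le_negSpace : fixSpace w ≤ negSpace n := inf_le_left

lemma finrank_fixSpace_le : finrank ℚ (fixSpace w) ≤ n :=
  (Submodule.finrank_mono fixSpace_le_negSpace).trans_eq finrank_negSpace

lemma fixSpace_one : fixSpace (1 : Perm (Fin n × Bool)) = negSpace n := by
  ext F; simp [mem_fixSpace]

lemma fixSpace_inv : fixSpace w⁻¹ = fixSpace w := by
  ext F
  simp only [mem_fixSpace, and_congr_right_iff]
  exact fun _ => ⟨fun h p => by simpa using (h (w p)).symm, fun h p => by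
    simpa using (h (w⁻¹ p)).symm⟩

lemma inf_le_fixSpace_mul : fixSpace u ⊓ fixSpace v ≤ fixSpace (u * v) := fun F hF => by
  rw [Submodule.mem_inf, mem_fixSpace, mem_fixSpace] at hF
  exact mem_fixSpace.2 ⟨hF.1.1, fun p => by rw [Perm.mul_apply, hF.1.2, hF.2.2]⟩

lemma fixSpace_le_fixSpace_mul_self : fixSpace w ≤ fixSpace (w * w) := by
  simpa using inf_le_fixSpace_mul (u := w) (v := w)

lemma finrank_fixSpace_add_finrank_fixSpace_le (u v : Perm (Fin n × Bool)) :
    finrank ℚ (fixSpace u) + finrank ℚ (fixSpace v) ≤ n + finrank ℚ (fixSpace (u * v)) := by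
  have h₁ := Submodule.finrank_sup_add_finrank_inf_eq (fixSpace u) (fixSpace v)
  have h₂ : finrank ℚ ↥(fixSpace u ⊔ fixSpace v) ≤ n :=
    (Submodule.finrank_mono (sup_le fixSpace_le_negSpace fixSpace_le_negSpace)).trans_eq
      finrank_negSpace
  have h₃ := Submodule.finrank_mono (inf_le_fixSpace_mul (u := u) (v := v))
  omega

lemma fixSpace_negPerm : fixSpace (negPerm n) = ⊥ := by
  refine eq_bot_iff.2 fun F hF => ?_
  rw [mem_fixSpace, mem_negSpace] at hF
  funext p
  have h := hF.2 p
  rw [negPerm_apply, hF.1] at h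
  show F p = 0
  linarith

lemma inf_fixSpace_eq_bot (h : u * v = negPerm n) : fixSpace u ⊓ fixSpace v = ⊥ := by
  rw [eq_bot_iff, ← fixSpace_negPerm, ← h]
  exact inf_le_fixSpace_mul

lemma mem_fixSpace_signedSwap {p q : Fin n × Bool} (hF : F ∈ negSpace n) (h : F p = F q) :
    F ∈ fixSpace (signedSwap p q) := by
  refine mem_fixSpace.2 ⟨hF, fun x => ?_⟩
  rw [mem_negSpace] at hF
  have hneg (y) : signedSwap p q (negp y) = negp (signedSwap p q y) := inB_signedSwap p q y
  by_cases h₁ : x = p; · simp [h₁, h]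
  by_cases h₂ : x = q; · simp [h₂, h]
  by_cases h₃ : x = negp p; · simp [h₃, hneg, hF, h]
  by_cases h₄ : x = negp q; · simp [h₄, hneg, hF, h]
  rw [signedSwap_apply_of_ne h₁ h₂ h₃ h₄]

lemma le_finrank_fixSpace_add_one {t : Perm (Fin n × Bool)} (ht : t ∈ reflB n) :
    n ≤ finrank ℚ (fixSpace t) + 1 := by
  obtain ⟨p, q, -, rfl⟩ := mem_reflB_iff.1 ht
  let L : ((Fin n × Bool) → ℚ) →ₗ[ℚ] ℚ :=
    LinearMap.proj (R := ℚ) (φ := fun _ => ℚ) p - LinearMap.proj q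
  have hle : negSpace n ⊓ LinearMap.ker L ≤ fixSpace (signedSwap p q) := fun F hF =>
    mem_fixSpace_signedSwap hF.1 (sub_eq_zero.1 hF.2)
  have := (negSpace n).finrank_le_finrank_inf_ker_add_one L
  have := Submodule.finrank_mono hle
  rw [finrank_negSpace] at *
  omega

lemma le_finrank_fixSpace_prod_add_length (l : List (Perm (Fin n × Bool)))
    (hl : ∀ t ∈ l, t ∈ reflB n) : n ≤ finrank ℚ (fixSpace l.prod) + l.length := by
  induction l with
  | nil => rw [List.prod_nil, fixSpace_one, finrank_negSpace]; simp
  | cons t l ih =>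
    have h₁ := le_finrank_fixSpace_add_one (hl t List.mem_cons_self)
    have h₂ := ih fun s hs => hl s (List.mem_cons_of_mem t hs)
    have h₃ := finrank_fixSpace_add_finrank_fixSpace_le t l.prod
    rw [List.prod_cons, List.length_cons]
    omega

def oddDelta (p : Fin n × Bool) : (Fin n × Bool) → ℚ := Pi.single p 1 - Pi.single (negp p) 1

lemma oddDelta_mem_negSpace (p : Fin n × Bool) : oddDelta p ∈ negSpace n := by
  refine mem_negSpace.2 fun x => ?_
  simp only [oddDelta, Pi.sub_apply, Pi.single_apply, negp_eq_iff, negp_negp]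
  ring

lemma oddDelta_mem_fixSpace_iff (hw : inB w) (p : Fin n × Bool) :
    oddDelta p ∈ fixSpace w ↔ w p = p := by
  rw [mem_fixSpace, and_iff_right (oddDelta_mem_negSpace p)]
  constructor
  · intro h
    by_contra hne
    have := h p
    simp only [oddDelta, Pi.sub_apply, Pi.single_apply, hne, if_true, if_false, ne_negp] at this
    split_ifs at this <;> norm_num at this
  · intro h x
    have h' : w (negp p) = negp p := by rw [hw, h]
    have e₁ : w x = p ↔ x = p := by rw [← h, w.injective.eq_iff, h]
    have e₂ : w x = negp p ↔ x = negp p := by rw [← h', w.injective.eq_iff, h']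
    simp only [oddDelta, Pi.sub_apply, Pi.single_apply, e₁, e₂]

lemma eq_one_of_negSpace_le_fixSpace (hw : inB w) (h : negSpace n ≤ fixSpace w) : w = 1 :=
  Equiv.ext fun p => (oddDelta_mem_fixSpace_iff hw p).1 (h (oddDelta_mem_negSpace p))

end fixSpace

section wordLen

variable {G : Type*} [Group G] {T : Set G}

lemma wordLen_le_length {l : List G} (hl : ∀ t ∈ l, t ∈ T) : wordLen T l.prod ≤ l.length :=
  Nat.sInf_le ⟨l, rfl, hl, rfl⟩

lemma exists_list_length_eq_wordLen {w : G} (hw : w ∈ Submonoid.closure T) :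
    ∃ l : List G, (∀ t ∈ l, t ∈ T) ∧ l.prod = w ∧ l.length = wordLen T w := by
  obtain ⟨l, hl, rfl⟩ := Submonoid.exists_list_of_mem_closure hw
  have : wordLen T l.prod ∈ {k | ∃ l' : List G, l'.length = k ∧ (∀ t ∈ l', t ∈ T) ∧
      l'.prod = l.prod} := Nat.sInf_mem ⟨l.length, l, rfl, hl, rfl⟩
  obtain ⟨l', hlen, hl', hprod⟩ := this
  exact ⟨l', hl', hprod, hlen⟩

lemma wordLen_mul_le {u v : G} (hu : u ∈ Submonoid.closure T) (hv : v ∈ Submonoid.closure T) :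
    wordLen T (u * v) ≤ wordLen T u + wordLen T v := by
  obtain ⟨l₁, h₁, rfl, e₁⟩ := exists_list_length_eq_wordLen hu
  obtain ⟨l₂, h₂, rfl, e₂⟩ := exists_list_length_eq_wordLen hv
  rw [← e₁, ← e₂, ← List.length_append, ← List.prod_append]
  exact wordLen_le_length fun t ht => (List.mem_append.1 ht).elim (h₁ t) (h₂ t)

lemma wordLen_one : wordLen T 1 = 0 :=
  Nat.eq_zero_of_le_zero (wordLen_le_length (l := []) (by simp))

lemma wordLen_le_one {t : G} (ht : t ∈ T) : wordLen T t ≤ 1 := by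
  simpa using wordLen_le_length (T := T) (l := [t]) (by simpa)

end wordLen

section reflectionLength

variable {w z : Perm (Fin n × Bool)}

lemma mem_closure_reflB (hw : inB w) : w ∈ Submonoid.closure (reflB n) := by
  induction h : w.support.card using Nat.strong_induction_on generalizing w with
  | _ k ih =>
  subst h
  by_cases h₁ : w = 1
  · exact h₁ ▸ one_mem _
  obtain ⟨p, hp⟩ : ∃ p, w p ≠ p := not_forall.1 fun h => h₁ (Equiv.ext h)
  set t := signedSwap p (w p)
  have ht : t ∈ reflB n := mem_reflB_iff.2 ⟨p, w p, hp, rfl⟩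
  -- `t` fixes the fixed points of `w` and sends `w p` back to `p`: `t * w` has smaller support
  have hfix (x) (hx : w x = x) : t x = x := by
    refine signedSwap_apply_of_ne ?_ ?_ ?_ ?_ <;> rintro rfl
    · exact hp hx
    · exact hp (w.injective hx)
    · rw [hw, negp_inj] at hx; exact hp hx
    · rw [hw, negp_inj] at hx; exact hp (w.injective hx)
  have hsub : (t * w).support ⊆ w.support := fun x hx => by
    rw [Perm.mem_support] at hx ⊢
    exact fun h => hx (by rw [Perm.mul_apply, h, hfix x h])
  have hlt : (t * w).support.card < w.support.card := by
    refine Finset.card_lt_card ((Finset.ssubset_iff_of_subset hsub).2 ⟨p, ?_, ?_⟩)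
    · exact Perm.mem_support.2 hp
    · simp [t]
  have hw' : w = t * (t * w) := by rw [← mul_assoc, signedSwap_mul_self, one_mul]
  rw [hw']
  exact mul_mem (Submonoid.subset_closure ht) (ih _ hlt (inB_mul (inB_signedSwap _ _) hw) rfl)

lemma le_finrank_fixSpace_add_wordLen (hw : inB w) :
    n ≤ finrank ℚ (fixSpace w) + wordLen (reflB n) w := by
  obtain ⟨l, hl, rfl, hlen⟩ := exists_list_length_eq_wordLen (mem_closure_reflB hw)
  exact hlen ▸ le_finrank_fixSpace_prod_add_length l hl

lemma wordLen_add_finrank_fixSpace_le (hz : inB z) (hz₂ : z * z = 1) :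
    wordLen (reflB n) z + finrank ℚ (fixSpace z) ≤ n := by
  induction h : n - finrank ℚ (fixSpace z) using Nat.strong_induction_on generalizing z with
  | _ k ih =>
  subst h
  by_cases h₁ : z = 1
  · subst h₁; rw [wordLen_one, fixSpace_one, finrank_negSpace, zero_add]
  obtain ⟨p, hp⟩ : ∃ p, z p ≠ p := not_forall.1 fun h => h₁ (Equiv.ext h)
  set t := signedSwap p (z p)
  have ht : t ∈ reflB n := mem_reflB_iff.2 ⟨p, z p, hp, rfl⟩
  have hzz : z (z p) = p := by rw [← Perm.mul_apply, hz₂, Perm.one_apply]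
  have hcomm : Commute z t := mul_inv_eq_iff_eq_mul.1 <| by
    rw [conj_signedSwap hz, hzz, signedSwap_comm]
  have htz : (t * z) * (t * z) = 1 := by
    rw [hcomm.mul_mul_mul_comm, signedSwap_mul_self, hz₂, one_mul]
  -- `t` fixes what `z` fixes, and `t * z` fixes `p` as well
  have hlt : fixSpace z < fixSpace (t * z) := by
    refine SetLike.lt_iff_le_and_exists.2 ⟨fun F hF => ?_, oddDelta p, ?_, ?_⟩
    · refine inf_le_fixSpace_mul ⟨mem_fixSpace_signedSwap (fixSpace_le_negSpace hF) ?_, hF⟩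
      exact ((mem_fixSpace.1 hF).2 p).symm
    · exact (oddDelta_mem_fixSpace_iff (inB_mul (inB_signedSwap _ _) hz) p).2 (by simp)
    · exact fun h => hp ((oddDelta_mem_fixSpace_iff hz p).1 h)
  have h₂ := Submodule.finrank_lt_finrank_of_lt hlt
  have h₃ := finrank_fixSpace_le (w := t * z)
  have h₄ := ih (n - finrank ℚ (fixSpace (t * z))) (by omega) (z := t * z)
    (inB_mul (inB_signedSwap _ _) hz) htz rfl
  have h₅ : wordLen (reflB n) z ≤ 1 + wordLen (reflB n) (t * z) := by
    have hz' : z = t * (t * z) := by rw [← mul_assoc, signedSwap_mul_self, one_mul]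
    calc wordLen (reflB n) z = wordLen (reflB n) (t * (t * z)) := congrArg _ hz'
      _ ≤ wordLen (reflB n) t + wordLen (reflB n) (t * z) :=
        wordLen_mul_le (Submonoid.subset_closure ht)
          (mem_closure_reflB (inB_mul (inB_signedSwap _ _) hz))
      _ ≤ 1 + wordLen (reflB n) (t * z) := by gcongr; exact wordLen_le_one ht
  omega

lemma wordLen_negPerm : wordLen (reflB n) (negPerm n) = n := by
  have h₁ := le_finrank_fixSpace_add_wordLen (inB_negPerm (n := n))
  have h₂ := wordLen_add_finrank_fixSpace_le inB_negPerm (negPerm_mul_self (n := n))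
  rw [fixSpace_negPerm, finrank_bot] at h₁ h₂
  omega

/-- `fixSpace z` and `fixSpace (z * negPerm n)` are the `±1`-eigenspaces of the involution `z`
on `negSpace n`. -/
lemma finrank_fixSpace_add_finrank_fixSpace_mul_negPerm (hz : inB z) (hz₂ : z * z = 1) :
    finrank ℚ (fixSpace z) + finrank ℚ (fixSpace (z * negPerm n)) = n := by
  have hzz (x) : z (z x) = x := by rw [← Perm.mul_apply, hz₂, Perm.one_apply]
  have hsup : fixSpace z ⊔ fixSpace (z * negPerm n) = negSpace n := by
    refine le_antisymm (sup_le fixSpace_le_negSpace fixSpace_le_negSpace) fun F hF => ?_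
    rw [mem_negSpace] at hF
    refine Submodule.mem_sup.2 ⟨fun x => (F x + F (z x)) / 2, ?_, fun x => (F x - F (z x)) / 2,
      ?_, funext fun x => by simp; ring⟩
    · refine mem_fixSpace.2 ⟨mem_negSpace.2 fun x => ?_, fun x => ?_⟩
      · simp only [hz x, hF]; ring
      · simp only [hzz]; ring
    · refine mem_fixSpace.2 ⟨mem_negSpace.2 fun x => ?_, fun x => ?_⟩
      · simp only [hz x, hF]; ring
      · simp only [Perm.mul_apply, negPerm_apply, hz x, hz (z x), hF, hzz]; ring
  have hinf := inf_fixSpace_eq_bot (u := z) (v := z * negPerm n) (by rw [← mul_assoc, hz₂, one_mul])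
  have := Submodule.finrank_sup_add_finrank_inf_eq (fixSpace z) (fixSpace (z * negPerm n))
  rw [hsup, hinf, finrank_bot, finrank_negSpace] at this
  omega

theorem absLe_negPerm_iff (hz : inB z) : absLe (reflB n) z (negPerm n) ↔ z * z = 1 := by
  rw [absLe, wordLen_negPerm]
  constructor
  · intro h
    set v := z⁻¹ * negPerm n
    have hv : inB v := inB_mul (inB_inv hz) inB_negPerm
    have h₁ := le_finrank_fixSpace_add_wordLen hz
    have h₂ := le_finrank_fixSpace_add_wordLen hv
    have hdim := Submodule.finrank_sup_add_finrank_inf_eq (fixSpace z) (fixSpace v)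
    rw [inf_fixSpace_eq_bot (mul_inv_cancel_left z _), finrank_bot] at hdim
    have hsup : fixSpace z ⊔ fixSpace v = negSpace n :=
      Submodule.eq_of_le_of_finrank_le (sup_le fixSpace_le_negSpace fixSpace_le_negSpace)
        (by rw [finrank_negSpace]; omega)
    -- `v` squares to `(z * z)⁻¹`, so both summands are fixed by `z * z`
    have hvv : v * v = (z * z)⁻¹ := by
      rw [(inB_iff_commute.1 (inB_inv hz)).symm.mul_mul_mul_comm, negPerm_mul_self, mul_one,
        mul_inv_rev]
    refine eq_one_of_negSpace_le_fixSpace (inB_mul hz hz) (hsup ▸ sup_le ?_ ?_)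
    · exact fixSpace_le_fixSpace_mul_self
    · exact fixSpace_le_fixSpace_mul_self.trans_eq (by rw [hvv, fixSpace_inv])
  · intro hz₂
    rw [inv_eq_of_mul_eq_one_right hz₂]
    have hy : inB (z * negPerm n) := inB_mul hz inB_negPerm
    have hy₂ : (z * negPerm n) * (z * negPerm n) = 1 := by
      rw [(inB_iff_commute.1 hz).symm.mul_mul_mul_comm, hz₂, negPerm_mul_self, one_mul]
    have h₁ := wordLen_add_finrank_fixSpace_le hz hz₂
    have h₂ := wordLen_add_finrank_fixSpace_le hy hy₂
    have h₃ := finrank_fixSpace_add_finrank_fixSpace_mul_negPerm hz hz₂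
    have h₄ := wordLen_mul_le (mem_closure_reflB hz) (mem_closure_reflB hy)
    rw [← mul_assoc, hz₂, one_mul, wordLen_negPerm] at h₄
    omega

end reflectionLength

noncomputable def involutionsOn (S : Finset (Fin n × Bool)) : Finset (Perm (Fin n × Bool)) :=
  {z | inB z ∧ z * z = 1 ∧ ∀ x ∉ S, z x = x}

def signedOrbit (r : Perm (Fin n × Bool)) (p : Fin n × Bool) : Finset (Fin n × Bool) :=
  {p, r p, negp p, negp (r p)}

section involutionsOn

variable {S : Finset (Fin n × Bool)} {r z : Perm (Fin n × Bool)} {p : Fin n × Bool}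

lemma mem_involutionsOn : z ∈ involutionsOn S ↔ inB z ∧ z * z = 1 ∧ ∀ x ∉ S, z x = x := by
  simp [involutionsOn]

lemma involutionsOn_empty : involutionsOn (∅ : Finset (Fin n × Bool)) = {1} := by
  ext z
  simp only [mem_involutionsOn, Finset.notMem_empty, not_false_eq_true, forall_const,
    Finset.mem_singleton]
  exact ⟨fun h => Equiv.ext h.2.2, by rintro rfl; exact ⟨fun _ => rfl, one_mul 1, fun _ => rfl⟩⟩

lemma apply_mem_of_mem_involutionsOn (hz : z ∈ involutionsOn S) (hp : p ∈ S) : z p ∈ S := by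
  obtain ⟨-, hz₂, hfix⟩ := mem_involutionsOn.1 hz
  by_contra h
  have hzz : z (z p) = p := by rw [← Perm.mul_apply, hz₂, Perm.one_apply]
  exact h (by rwa [← hzz, hfix _ h] at hp)

lemma negp_mem_signedOrbit {x : Fin n × Bool} (hx : x ∈ signedOrbit r p) :
    negp x ∈ signedOrbit r p := by
  simp only [signedOrbit, Finset.mem_insert, Finset.mem_singleton] at hx ⊢
  rcases hx with rfl | rfl | rfl | rfl <;> simp

lemma signedOrbit_subset (hS : ∀ x ∈ S, negp x ∈ S) (hp : p ∈ S) (hrp : r p ∈ S) :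
    signedOrbit r p ⊆ S := by
  intro x hx
  simp only [signedOrbit, Finset.mem_insert, Finset.mem_singleton] at hx
  rcases hx with rfl | rfl | rfl | rfl <;> simp [hp, hrp, hS]

lemma negp_mem_sdiff_signedOrbit (hS : ∀ x ∈ S, negp x ∈ S) {x : Fin n × Bool}
    (hx : x ∈ S \ signedOrbit r p) : negp x ∈ S \ signedOrbit r p := by
  rw [Finset.mem_sdiff] at hx ⊢
  exact ⟨hS x hx.1, fun h => hx.2 (by simpa using negp_mem_signedOrbit h)⟩

lemma signedSwap_apply_of_notMem_signedOrbit {q x : Fin n × Bool}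
    (hx : x ∉ signedOrbit (signedSwap p q) p) : signedSwap p q x = x := by
  simp only [signedOrbit, signedSwap_apply_left, Finset.mem_insert, Finset.mem_singleton,
    not_or] at hx
  exact signedSwap_apply_of_ne hx.1 hx.2.1 hx.2.2.1 hx.2.2.2

lemma apply_mem_signedOrbit (hr : inB r) (hr₂ : r * r = 1) {x : Fin n × Bool}
    (hx : x ∈ signedOrbit r p) : r x ∈ signedOrbit r p := by
  have hrr : r (r p) = p := by rw [← Perm.mul_apply, hr₂, Perm.one_apply]
  simp only [signedOrbit, Finset.mem_insert, Finset.mem_singleton] at hx ⊢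
  rcases hx with rfl | rfl | rfl | rfl <;> simp [hr _, hrr]

lemma eqOn_signedOrbit (hr : inB r) (hr₂ : r * r = 1) (hz : inB z) (hz₂ : z * z = 1)
    (hzp : z p = r p) {x : Fin n × Bool} (hx : x ∈ signedOrbit r p) : z x = r x := by
  have hrr : r (r p) = p := by rw [← Perm.mul_apply, hr₂, Perm.one_apply]
  have hzz : z (z p) = p := by rw [← Perm.mul_apply, hz₂, Perm.one_apply]
  simp only [signedOrbit, Finset.mem_insert, Finset.mem_singleton] at hx
  rcases hx with rfl | rfl | rfl | rfl
  · exact hzp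
  · rw [← hzp, hzz, hzp, hrr]
  · rw [hz, hr, hzp]
  · rw [hz, hr, ← hzp, hzz, hzp, hrr]

lemma disjoint_of_fixed_on_signedOrbit {z' : Perm (Fin n × Bool)}
    (hr : ∀ x ∉ signedOrbit r p, r x = x) (hz' : ∀ x ∈ signedOrbit r p, z' x = x) :
    Perm.Disjoint z' r := fun x =>
  if hx : x ∈ signedOrbit r p then Or.inl (hz' x hx) else Or.inr (hr x hx)

lemma card_involutionsOn_filter_apply_eq (hr : inB r) (hr₂ : r * r = 1)
    (hrO : ∀ x ∉ signedOrbit r p, r x = x) (hOS : signedOrbit r p ⊆ S) :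
    ((involutionsOn S).filter (fun z => z p = r p)).card =
      (involutionsOn (S \ signedOrbit r p)).card := by
  have hsq (z' : Perm (Fin n × Bool)) (hd : Perm.Disjoint z' r) :
      (z' * r) * (z' * r) = (z' * z') * (r * r) := hd.commute.symm.mul_mul_mul_comm _ _
  refine Finset.card_nbij' (· * r) (· * r) (fun z hz => ?_) (fun z' hz' => ?_)
    (fun z _ => by simp [mul_assoc, hr₂]) (fun z' _ => by simp [mul_assoc, hr₂])
  · simp only [Finset.coe_filter, Set.mem_ofPred_eq, mem_involutionsOn] at hz
    obtain ⟨⟨hzB, hz₂, hfix⟩, hzp⟩ := hz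
    have hfixO (x) (hx : x ∈ signedOrbit r p) : (z * r) x = x := by
      rw [Perm.mul_apply, eqOn_signedOrbit hr hr₂ hzB hz₂ hzp (apply_mem_signedOrbit hr hr₂ hx),
        ← Perm.mul_apply, hr₂, Perm.one_apply]
    refine mem_involutionsOn.2 ⟨inB_mul hzB hr, ?_, fun x hx => ?_⟩
    · have h := hsq _ (disjoint_of_fixed_on_signedOrbit hrO hfixO)
      rw [mul_assoc z, hr₂, mul_one, hz₂, mul_one] at h
      exact h.symm
    · by_cases hxO : x ∈ signedOrbit r p
      · exact hfixO x hxO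
      · have hxS : x ∉ S := fun h => hx (Finset.mem_sdiff.2 ⟨h, hxO⟩)
        rw [Perm.mul_apply, hrO x hxO, hfix x hxS]
  · simp only [Finset.mem_coe, mem_involutionsOn] at hz'
    obtain ⟨hzB, hz₂, hfix⟩ := hz'
    have hfixO (x) (hx : x ∈ signedOrbit r p) : z' x = x :=
      hfix x fun h => (Finset.mem_sdiff.1 h).2 hx
    simp only [Finset.coe_filter, Set.mem_ofPred_eq, mem_involutionsOn]
    refine ⟨⟨inB_mul hzB hr, ?_, fun x hx => ?_⟩, ?_⟩
    · rw [hsq _ (disjoint_of_fixed_on_signedOrbit hrO hfixO), hz₂, hr₂, mul_one]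
    · have hxO : x ∉ signedOrbit r p := fun h => hx (hOS h)
      rw [Perm.mul_apply, hrO x hxO, hfix x fun h => hx (Finset.mem_sdiff.1 h).1]
    · rw [Perm.mul_apply, hfixO _ (apply_mem_signedOrbit hr hr₂ (by simp [signedOrbit]))]

end involutionsOn

def involutionTerm (m k : ℕ) : ℕ := m.choose (2 * k) * 2 ^ (m - k) * dfac k

def involutionCount (m : ℕ) : ℕ := ∑ k ∈ Finset.range (m / 2 + 1), involutionTerm m k

lemma involutionCount_eq_sum_range {m N : ℕ} (h : m / 2 < N) :
    involutionCount m = ∑ k ∈ Finset.range N, involutionTerm m k := by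
  refine Finset.sum_subset (Finset.range_subset_range.2 (by omega)) fun k hk hk' => ?_
  simp only [Finset.mem_range] at hk hk'
  simp [involutionTerm, Nat.choose_eq_zero_of_lt (by omega : m < 2 * k)]

lemma involutionTerm_zero (m : ℕ) : involutionTerm m 0 = 2 ^ m := by simp [involutionTerm, dfac]

lemma involutionTerm_succ_succ (m k : ℕ) :
    involutionTerm (m + 2) (k + 1) =
      2 * involutionTerm (m + 1) (k + 1) + 2 * (m + 1) * involutionTerm m k := by
  unfold involutionTerm
  rcases Nat.lt_or_ge m k with h | h
  · simp [Nat.choose_eq_zero_of_lt (by omega : m + 2 < 2 * (k + 1)),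
      Nat.choose_eq_zero_of_lt (by omega : m + 1 < 2 * (k + 1)),
      Nat.choose_eq_zero_of_lt (by omega : m < 2 * k)]
  · have hpow : 2 ^ (m + 2 - (k + 1)) = 2 * 2 ^ (m + 1 - (k + 1)) := by
      rw [show m + 2 - (k + 1) = m + 1 - (k + 1) + 1 by omega, pow_succ, mul_comm]
    have hchoose := Nat.add_one_mul_choose_eq m (2 * k)
    rw [show 2 * (k + 1) = 2 * k + 1 + 1 by ring, Nat.choose_succ_succ' (m + 1), hpow,
      show m + 1 - (k + 1) = m - k by omega, dfac, Finset.prod_range_succ, ← dfac]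
    have hrhs : 2 * (m + 1) * (m.choose (2 * k) * 2 ^ (m - k) * dfac k) =
        2 * 2 ^ (m - k) * dfac k * ((m + 1) * m.choose (2 * k)) := by ring
    rw [hrhs, hchoose]
    ring

lemma involutionCount_succ (m : ℕ) :
    involutionCount (m + 1) = 2 * involutionCount m + 2 * m * involutionCount (m - 1) := by
  rcases m with _ | m
  · decide
  rw [involutionCount_eq_sum_range (N := m + 3) (by omega),
    involutionCount_eq_sum_range (m := m + 1) (N := m + 3) (by omega),
    involutionCount_eq_sum_range (m := m + 1 - 1) (N := m + 2) (by omega),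
    Finset.sum_range_succ', Finset.sum_range_succ' (fun k => involutionTerm (m + 1) k)]
  simp only [involutionTerm_succ_succ, Finset.sum_add_distrib, ← Finset.mul_sum,
    involutionTerm_zero, Nat.add_sub_cancel]
  ring

lemma card_involutionsOn {m : ℕ} {S : Finset (Fin n × Bool)} (hS : ∀ x ∈ S, negp x ∈ S)
    (hm : S.card = 2 * m) : (involutionsOn S).card = involutionCount m := by
  induction m using Nat.strong_induction_on generalizing S with
  | _ m ih =>
  rcases m with _ | k
  · rw [Finset.card_eq_zero.1 hm, involutionsOn_empty]; rfl
  obtain ⟨p, hp⟩ : S.Nonempty := Finset.card_pos.1 (by omega)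
  have hnp : negp p ∈ S.erase p := Finset.mem_erase.2 ⟨negp_ne p, hS p hp⟩
  have hfiber (r : Perm (Fin n × Bool)) (hr : inB r) (hr₂ : r * r = 1)
      (hrO : ∀ x ∉ signedOrbit r p, r x = x) (hrp : r p ∈ S) (j : ℕ)
      (hj : (signedOrbit r p).card = 2 * (j + 1)) :
      ((involutionsOn S).filter (fun z => z p = r p)).card = involutionCount (k - j) := by
    have hOS := signedOrbit_subset hS hp hrp
    have hcard := Finset.card_le_card hOS
    rw [card_involutionsOn_filter_apply_eq hr hr₂ hrO hOS]
    refine ih (k - j) (by omega) (fun x => negp_mem_sdiff_signedOrbit hS) ?_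
    rw [Finset.card_sdiff_of_subset hOS, hm, hj]
    omega
  rw [Finset.card_eq_sum_card_fiberwise fun z hz => apply_mem_of_mem_involutionsOn hz hp,
    ← Finset.add_sum_erase _ _ hp, ← Finset.add_sum_erase _ _ hnp]
  have h₁ : ((involutionsOn S).filter (fun z => z p = p)).card = involutionCount k :=
    hfiber 1 (fun _ => rfl) (one_mul 1) (fun _ _ => rfl) hp 0 (by simp [signedOrbit])
  have h₂ : ((involutionsOn S).filter (fun z => z p = negp p)).card = involutionCount k := by
    simpa using hfiber (signedSwap p (negp p)) (inB_signedSwap _ _) (signedSwap_mul_self _ _)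
      (fun _ => signedSwap_apply_of_notMem_signedOrbit) (by simpa using hS p hp) 0
      (by simp [signedOrbit])
  have h₃ (q) (hq : q ∈ (S.erase p).erase (negp p)) :
      ((involutionsOn S).filter (fun z => z p = q)).card = involutionCount (k - 1) := by
    simp only [Finset.mem_erase] at hq
    obtain ⟨hqn, hqp, hqS⟩ := hq
    have hpq : p ≠ negp q := fun h => hqn (eq_negp_comm.1 h)
    have hO : signedOrbit (signedSwap p q) p = {p, q, negp p, negp q} := by
      simp [signedOrbit]
    simpa using hfiber (signedSwap p q) (inB_signedSwap _ _) (signedSwap_mul_self _ _)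
      (fun _ => signedSwap_apply_of_notMem_signedOrbit) (by simpa using hqS) 1
      (by rw [hO]; simp [Finset.card_insert_of_notMem, hqn, hpq, hqp.symm])
  rw [h₁, h₂, Finset.sum_congr rfl h₃, Finset.sum_const, Finset.card_erase_of_mem hnp,
    Finset.card_erase_of_mem hp, hm, smul_eq_mul, involutionCount_succ]
  rw [show 2 * (k + 1) - 1 - 1 = 2 * k by omega]
  ring

end

/-- the number of elements of `L_n = [e,[1][2]⋯[n]] ⊆ Abs(B_n)` is
`∑_{k=0}^{⌊n/2⌋} C(n,2k) 2^{n-k} (2k-1)!!`. -/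
theorem stmt_11 (n : ℕ) :
    Nat.card (Ln n) =
      ∑ k ∈ Finset.range (n / 2 + 1), n.choose (2 * k) * 2 ^ (n - k) * dfac k := by
  have hLn : Ln n = ↑(involutionsOn (Finset.univ : Finset (Fin n × Bool))) := by
    ext z
    simp only [Ln, Set.mem_ofPred_eq, Finset.mem_coe, mem_involutionsOn, Finset.mem_univ,
      not_true_eq_false, IsEmpty.forall_iff, implies_true, and_true]
    exact and_congr_right absLe_negPerm_iff
  rw [hLn, Nat.card_coe_set_eq, Set.ncard_coe_finset]
  exact card_involutionsOn (fun x _ => Finset.mem_univ _) (by simp [mul_comm])
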